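/- With condition (I) as defined via fibers and thickness (a set E ⊆ ℕ₀ⁿ satisfies condition (I) if it contains Ê ⊆ (ℕ₊)ⁿ with ∑_{k ∈ π₁(Ê)} 1/k = ∞ and all nonempty fibers Ê(a₁,…,a_j), 1 ≤ j < n, thick): if Z₁, …, Z_m ⊆ ℕ₀ⁿ and ⋃_{j=1}^m Z_j satisfies condition (I), then some Z_j satisfies condition (I). -/

import Mathlib

open scoped ENNReal

/-- The fiber of `E` consisting of multi-indices whose coordinates below `j`
agree with those of `a`. -/
def fiberSet {n : ℕ} (E : Set (Fin n → ℕ)) (j : Fin n) (a : Fin n → ℕ) :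
    Set (Fin n → ℕ) :=
  {x ∈ E | ∀ i : Fin n, i < j → x i = a i}

/-- A set `F` of multi-indices is *thick* in the coordinate `j` if the positive
integers occurring as `j`-th coordinates of elements of `F` have divergent
sum of reciprocals. -/
def ThickAt {n : ℕ} (F : Set (Fin n → ℕ)) (j : Fin n) : Prop :=
  ∑' k : {k : ℕ | 0 < k ∧ ∃ x ∈ F, x j = k}, (1 : ℝ≥0∞) / ((k : ℕ) : ℝ≥0∞) = ⊤

/-- Condition (I): `E` contains a subset `Ê` of positive multi-indices such that the
first coordinates of `Ê` have divergent sum of reciprocals and, for every `j ≥ 1`,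
every nonempty fiber of `Ê` obtained by fixing the first `j` coordinates is thick
in the `(j+1)`-st coordinate. -/
def CondI {n : ℕ} [NeZero n] (E : Set (Fin n → ℕ)) : Prop :=
  ∃ Ehat : Set (Fin n → ℕ), Ehat ⊆ E ∧ (∀ x ∈ Ehat, ∀ i, 0 < x i) ∧
    ThickAt Ehat 0 ∧
    ∀ j : Fin n, 0 < j → ∀ a : Fin n → ℕ,
      (fiberSet Ehat j a).Nonempty → ThickAt (fiberSet Ehat j a) j

/-!
Take `Ê ⊆ ⋃ Zⱼ` witnessing (I). Working backwards from the last coordinate, call a prefix of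
length `d` thick for `Ê ∩ Zⱼ` if the values of the next coordinate that extend it to a thick
prefix of length `d + 1` have divergent harmonic sum, full-length prefixes being thick when they
lie in `Ê ∩ Zⱼ`. A finite union of sets with convergent harmonic sum has convergent harmonic sum,
so, by backward induction along the fibers of `Ê`, every prefix of a point of `Ê` is thick for some
`j`. In particular the empty prefix is thick for some `j`, and then the points of `Ê ∩ Zⱼ` all of
whose prefixes are thick form a witness of (I) for `Zⱼ`.
-/

-- Only positive elements count, since `1 / 0 = ⊤` in `ℝ≥0∞`.
def HarmonicDivergent (S : Set ℕ) : Prop :=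
  ∑' k : {k : ℕ | 0 < k ∧ k ∈ S}, (1 : ℝ≥0∞) / ((k : ℕ) : ℝ≥0∞) = ⊤

theorem ENNReal.exists_tsum_eq_top_of_tsum_iUnion_eq_top {α ι : Type*} [Finite ι]
    (f : α → ℝ≥0∞) (T : ι → Set α) (h : ∑' x : ⋃ i, T i, f x = ⊤) :
    ∃ i, ∑' x : T i, f x = ⊤ := by
  cases nonempty_fintype ι
  by_contra! hfin
  have hsum : ∑ i, ∑' x : T i, f x < ⊤ := ENNReal.sum_lt_top.mpr fun i _ => (hfin i).lt_top
  exact hsum.not_ge (h ▸ ENNReal.tsum_iUnion_le f T)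

namespace HarmonicDivergent

theorem mono {S T : Set ℕ} (hST : S ⊆ T) (hS : HarmonicDivergent S) : HarmonicDivergent T :=
  top_le_iff.mp <| hS ▸ ENNReal.tsum_mono_subtype (fun k : ℕ => (1 : ℝ≥0∞) / (k : ℝ≥0∞))
    fun _ hk => ⟨hk.1, hST hk.2⟩

theorem nonempty {S : Set ℕ} (hS : HarmonicDivergent S) : S.Nonempty := by
  rw [Set.nonempty_iff_ne_empty]
  rintro rfl
  simp [HarmonicDivergent] at hS

theorem exists_of_iUnion {ι : Type*} [Finite ι] {S : ι → Set ℕ}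
    (h : HarmonicDivergent (⋃ i, S i)) : ∃ i, HarmonicDivergent (S i) := by
  have hset : {k : ℕ | 0 < k ∧ k ∈ ⋃ i, S i} = ⋃ i, {k : ℕ | 0 < k ∧ k ∈ S i} := by
    ext k; simp
  unfold HarmonicDivergent at h ⊢
  rw [hset] at h
  exact ENNReal.exists_tsum_eq_top_of_tsum_iUnion_eq_top (fun k : ℕ => 1 / (k : ℝ≥0∞)) _ h

end HarmonicDivergent

theorem thickAt_iff_harmonicDivergent {n : ℕ} (F : Set (Fin n → ℕ)) (j : Fin n) :
    ThickAt F j ↔ HarmonicDivergent ((· j) '' F) :=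
  Iff.rfl

section Fibers

variable {n : ℕ}

-- At `d = 0` the fiber is `E` itself, so this includes thickness of a nonempty `E` in the first
-- coordinate.
def FibersThick (E : Set (Fin n → ℕ)) : Prop :=
  ∀ (d : Fin n) (a : Fin n → ℕ), (fiberSet E d a).Nonempty → ThickAt (fiberSet E d a) d

theorem fiberSet_zero [NeZero n] (E : Set (Fin n → ℕ)) (a : Fin n → ℕ) : fiberSet E 0 a = E := by
  ext x
  simp [fiberSet]

theorem ThickAt.nonempty {F : Set (Fin n → ℕ)} {j : Fin n} (h : ThickAt F j) : F.Nonempty :=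
  ((thickAt_iff_harmonicDivergent F j).mp h).nonempty.of_image

theorem condI_iff [NeZero n] {E : Set (Fin n → ℕ)} :
    CondI E ↔ ∃ Ehat ⊆ E, (∀ x ∈ Ehat, ∀ i, 0 < x i) ∧ Ehat.Nonempty ∧ FibersThick Ehat := by
  constructor
  · rintro ⟨Ehat, hsub, hpos, h0, hfib⟩
    refine ⟨Ehat, hsub, hpos, h0.nonempty, fun d a ha => ?_⟩
    rcases eq_or_ne d 0 with rfl | hd
    · rwa [fiberSet_zero]
    · exact hfib d (Fin.pos_iff_ne_zero' d |>.mpr hd) a ha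
  · rintro ⟨Ehat, hsub, hpos, ⟨x, hx⟩, hfib⟩
    refine ⟨Ehat, hsub, hpos, ?_, fun d _ => hfib d⟩
    simpa only [fiberSet_zero] using hfib 0 x (by rw [fiberSet_zero]; exact ⟨x, hx⟩)

end Fibers

section ThickPrefixes

variable {n : ℕ} {F : Set (Fin n → ℕ)}

open Function

/-- `thickPrefixes F d` consists of the points whose first `d` coordinates can be completed
inside `F`, each further coordinate ranging over a harmonically divergent set of values. -/
def thickPrefixes (F : Set (Fin n → ℕ)) : Fin (n + 1) → Set (Fin n → ℕ) :=
  Fin.reverseInduction F fun d P => {a | HarmonicDivergent {k | update a d k ∈ P}}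

@[simp]
theorem thickPrefixes_last : thickPrefixes F (Fin.last n) = F :=
  Fin.reverseInduction_last

theorem mem_thickPrefixes_castSucc {d : Fin n} {a : Fin n → ℕ} :
    a ∈ thickPrefixes F d.castSucc ↔
      HarmonicDivergent {k | update a d k ∈ thickPrefixes F d.succ} := by
  rw [thickPrefixes, Fin.reverseInduction_castSucc]
  rfl

theorem mem_thickPrefixes_congr {d : Fin (n + 1)} {x y : Fin n → ℕ}
    (h : ∀ i : Fin n, i.castSucc < d → x i = y i) :
    x ∈ thickPrefixes F d ↔ y ∈ thickPrefixes F d := by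
  induction d using Fin.reverseInduction generalizing x y with
  | last => rw [funext fun i => h i (Fin.castSucc_lt_last i)]
  | cast d ih =>
    have hupdate (k : ℕ) : update x d k ∈ thickPrefixes F d.succ ↔
        update y d k ∈ thickPrefixes F d.succ := ih fun i hi => by
      rcases eq_or_ne i d with rfl | hne
      · simp
      · rw [update_of_ne hne, update_of_ne hne]
        have hid : i < d := lt_of_le_of_ne (Fin.castSucc_lt_succ_iff.mp hi) hne
        exact h i (Fin.castSucc_lt_castSucc_iff.mpr hid)
    simp only [mem_thickPrefixes_castSucc, hupdate]

theorem update_mem_thickPrefixes_of_le_succ {d : Fin n} {x : Fin n → ℕ} {k : ℕ}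
    (hx : ∀ d' ≤ d.castSucc, x ∈ thickPrefixes F d')
    (hk : update x d k ∈ thickPrefixes F d.succ) :
    ∀ d' ≤ d.succ, update x d k ∈ thickPrefixes F d' := by
  intro d' hd'
  rcases hd'.lt_or_eq with hlt | rfl
  · have hle : d' ≤ d.castSucc := Fin.le_castSucc_iff.mpr hlt
    refine (mem_thickPrefixes_congr fun i hi => ?_).mpr (hx d' hle)
    exact update_of_ne (Fin.castSucc_lt_castSucc_iff.mp (hi.trans_le hle)).ne _ _
  · exact hk

theorem exists_mem_thickPrefixes {ι : Type*} [Finite ι] {F : ι → Set (Fin n → ℕ)}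
    (hF : FibersThick (⋃ i, F i)) (d : Fin (n + 1)) {x : Fin n → ℕ} (hx : x ∈ ⋃ i, F i) :
    ∃ i, x ∈ thickPrefixes (F i) d := by
  induction d using Fin.reverseInduction generalizing x with
  | last => simpa using hx
  | cast d ih =>
    simp only [mem_thickPrefixes_castSucc]
    apply HarmonicDivergent.exists_of_iUnion
    refine .mono ?_ <| (thickAt_iff_harmonicDivergent _ d).mp (hF d x ⟨x, hx, fun _ _ => rfl⟩)
    rintro _ ⟨y, ⟨hy, hyx⟩, rfl⟩
    obtain ⟨i, hi⟩ := ih hy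
    refine Set.mem_iUnion.mpr ⟨i, (mem_thickPrefixes_congr fun j hj => ?_).mp hi⟩
    rcases eq_or_ne j d with rfl | hne
    · simp
    · rw [update_of_ne hne]
      exact hyx j (lt_of_le_of_ne (Fin.castSucc_lt_succ_iff.mp hj) hne)

def thickCore (F : Set (Fin n → ℕ)) : Set (Fin n → ℕ) :=
  {x | ∀ d, x ∈ thickPrefixes F d}

theorem thickCore_subset : thickCore F ⊆ F :=
  fun x hx => by simpa using hx (Fin.last n)

theorem exists_mem_thickCore {d : Fin (n + 1)} {x : Fin n → ℕ}
    (hx : ∀ d' ≤ d, x ∈ thickPrefixes F d') :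
    ∃ y ∈ thickCore F, ∀ i : Fin n, i.castSucc < d → y i = x i := by
  induction d using Fin.reverseInduction generalizing x with
  | last => exact ⟨x, fun d' => hx d' (Fin.le_last d'), fun _ _ => rfl⟩
  | cast d ih =>
    obtain ⟨k, hk⟩ := (mem_thickPrefixes_castSucc.mp (hx _ le_rfl)).nonempty
    obtain ⟨y, hy, hyx⟩ := ih (update_mem_thickPrefixes_of_le_succ hx hk)
    refine ⟨y, hy, fun i hi => ?_⟩
    rw [hyx i (hi.trans Fin.castSucc_lt_succ),
      update_of_ne (Fin.castSucc_lt_castSucc_iff.mp hi).ne]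

theorem thickCore_nonempty (h : (thickPrefixes F 0).Nonempty) : (thickCore F).Nonempty := by
  obtain ⟨x, hx⟩ := h
  obtain ⟨y, hy, -⟩ := exists_mem_thickCore (d := 0) fun d' hd' => Fin.le_zero_iff.mp hd' ▸ hx
  exact ⟨y, hy⟩

theorem fibersThick_thickCore : FibersThick (thickCore F) := by
  rintro d a ⟨x, hx, hxa⟩
  refine (mem_thickPrefixes_castSucc.mp (hx d.castSucc)).mono fun k hk => ?_
  obtain ⟨y, hy, hyx⟩ :=
    exists_mem_thickCore (update_mem_thickPrefixes_of_le_succ (fun d' _ => hx d') hk)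
  refine ⟨y, ⟨hy, fun i hi => ?_⟩, ?_⟩
  · rw [hyx i (Fin.castSucc_lt_succ_iff.mpr hi.le), update_of_ne hi.ne, hxa i hi]
  · rw [hyx d Fin.castSucc_lt_succ, update_self]

end ThickPrefixes

theorem stmt_4_general {n m : ℕ} [NeZero n] (Z : Fin m → Set (Fin n → ℕ))
    (h : CondI (⋃ j, Z j)) : ∃ j, CondI (Z j) := by
  obtain ⟨E, hEZ, hpos, ⟨x, hx⟩, hE⟩ := condI_iff.mp h
  have hE_eq : ⋃ j, E ∩ Z j = E := by
    rw [← Set.inter_iUnion]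
    exact Set.inter_eq_left.mpr hEZ
  obtain ⟨j, hj⟩ :=
    exists_mem_thickPrefixes (F := fun j => E ∩ Z j) (by rwa [hE_eq]) 0 (by rwa [hE_eq])
  exact ⟨j, condI_iff.mpr ⟨thickCore (E ∩ Z j), thickCore_subset.trans Set.inter_subset_right,
    fun y hy => hpos y (thickCore_subset hy).1, thickCore_nonempty ⟨x, hj⟩,
    fibersThick_thickCore⟩⟩

/-- If a finite union `⋃ j, Z j` satisfies condition (I), then some `Z j`
satisfies condition (I). -/
theorem stmt_4 {n m : ℕ} [NeZero n] (hm : 0 < m) (Z : Fin m → Set (Fin n → ℕ))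
    (h : CondI (⋃ j, Z j)) : ∃ j, CondI (Z j) :=
  stmt_4_general Z h
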